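/- Suppose a family of complex coefficients {R^σ_{k,j} : k,j ∈ ℤ²∖{0}, σ ∈ {±}} satisfies |R^σ_{k,j}| ≤ C·min(|k|,|j|)^μ · max(|k|,|j|)^{−ρ} for some μ, ρ, C > 0. Define the bilinear operator R(ʒ)v := Σ_{k,j,σ} R^σ_{k,j} ʒ^σ_k v_j e^{i(σk+j)·x}, where ʒ^+_k = ʒ_k, ʒ^-_k = conj(ʒ_k). Then for every s ≥ 2 + μ there is C_s > 0 such that ‖R(ʒ)v‖_{s+ρ} ≤ C_s (‖ʒ‖_{2+μ}‖v‖_s + ‖ʒ‖_s‖v‖_{2+μ}) for all ʒ ∈ H^s(𝕋²;ℂ) and v ∈ Ḣ^s(𝕋²;ℂ). -/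

import Mathlib

noncomputable section

/-- Euclidean norm on `ℤ²`. -/
def znrm (k : ℤ × ℤ) : ℝ := Real.sqrt ((k.1 : ℝ) ^ 2 + (k.2 : ℝ) ^ 2)

/-- Japanese bracket `⟨k⟩ = √(1+|k|²)` on `ℤ²`. -/
def hnrm (k : ℤ × ℤ) : ℝ := Real.sqrt (1 + (k.1 : ℝ) ^ 2 + (k.2 : ℝ) ^ 2)

/-- Sobolev norm of a sequence of Fourier coefficients. -/
def sob (s : ℝ) (z : ℤ × ℤ → ℂ) : ℝ :=
  Real.sqrt (∑' k : ℤ × ℤ, hnrm k ^ (2 * s) * ‖z k‖ ^ 2)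

/-!
If `|k| ≤ |j|`, then `⟨k + j⟩ ≤ 2⟨j⟩` and `|j|^{-ρ} ≤ 2^ρ ⟨j⟩^{-ρ}` absorb the `ρ` extra
derivatives, so `⟨k + j⟩^{s+ρ} |R_{k,j}| ≲ ⟨k⟩^μ ⟨j⟩^s + ⟨k⟩^s ⟨j⟩^μ`. Hence the coefficients of
`R(ʒ)v` are dominated by convolutions of `⟨·⟩^μ |ʒ|` with `⟨·⟩^s |v|` and vice versa. Young's
inequality `ℓ¹ * ℓ² ⊆ ℓ²` bounds these, and Cauchy–Schwarz against the square summable weight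
`⟨k⟩^{-2}` on `ℤ²` bounds the `ℓ¹` norm of `⟨k⟩^μ |ʒ_k|` by `‖ʒ‖_{2+μ}`. The estimates are done
in `ℝ≥0∞`, so that summability only has to be checked at the very end.
-/

open scoped ENNReal

namespace ENNReal

variable {ι : Type*}

theorem add_sq_le_two_mul (a b : ℝ≥0∞) : (a + b) ^ 2 ≤ 2 * (a ^ 2 + b ^ 2) := by
  induction a using ENNReal.recTopCoe with
  | top => simp
  | coe a =>
    induction b using ENNReal.recTopCoe with
    | top => simp
    | coe b => exact_mod_cast (add_sq_le : ((a : NNReal) + b) ^ 2 ≤ _)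

theorem tsum_add_sq_le (f g : ι → ℝ≥0∞) :
    ∑' i, (f i + g i) ^ 2 ≤ 2 * (∑' i, f i ^ 2 + ∑' i, g i ^ 2) := by
  rw [← ENNReal.tsum_add, ← ENNReal.tsum_mul_left]
  exact ENNReal.tsum_le_tsum fun i => add_sq_le_two_mul _ _

theorem tsum_mul_sq_le (f g : ι → ℝ≥0∞) :
    (∑' i, f i * g i) ^ 2 ≤ (∑' i, f i ^ 2) * ∑' i, g i ^ 2 := by
  refine le_of_tendsto' ((ENNReal.continuous_pow 2).tendsto _ |>.comp
    ENNReal.summable.hasSum) fun s => ?_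
  have hs := ENNReal.inner_le_Lp_mul_Lq s f g Real.HolderConjugate.two_two
  calc (∑ i ∈ s, f i * g i) ^ 2
      ≤ ((∑ i ∈ s, f i ^ (2 : ℝ)) ^ (1 / 2 : ℝ) * (∑ i ∈ s, g i ^ (2 : ℝ)) ^ (1 / 2 : ℝ)) ^ 2 :=
        pow_le_pow_left' hs 2
    _ = (∑ i ∈ s, f i ^ 2) * ∑ i ∈ s, g i ^ 2 := by
        simp only [ENNReal.rpow_ofNat, mul_pow, ← ENNReal.rpow_mul_natCast]
        norm_num
    _ ≤ (∑' i, f i ^ 2) * ∑' i, g i ^ 2 := by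
        gcongr <;> exact ENNReal.sum_le_tsum s

theorem tsum_sq_le_tsum_mul_tsum {r f g : ι → ℝ≥0∞} (h : ∀ i, r i ^ 2 ≤ f i * g i) :
    (∑' i, r i) ^ 2 ≤ (∑' i, f i) * ∑' i, g i := by
  have hr : ∀ i, r i ≤ f i ^ (1 / 2 : ℝ) * g i ^ (1 / 2 : ℝ) := fun i => by
    rw [← ENNReal.mul_rpow_of_nonneg _ _ (by norm_num), ← ENNReal.rpow_le_rpow_iff two_pos,
      ← ENNReal.rpow_mul]
    simpa using h i
  calc (∑' i, r i) ^ 2 ≤ (∑' i, f i ^ (1 / 2 : ℝ) * g i ^ (1 / 2 : ℝ)) ^ 2 := by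
        gcongr with i; exact hr i
    _ ≤ _ := tsum_mul_sq_le _ _
    _ = (∑' i, f i) * ∑' i, g i := by
        simp only [← ENNReal.rpow_mul_natCast]
        norm_num

theorem tsum_sq_tsum_mul_sub_le {G : Type*} [AddGroup G] (p q : G → ℝ≥0∞) :
    ∑' ℓ, (∑' k, p k * q (ℓ - k)) ^ 2 ≤ (∑' k, p k) ^ 2 * ∑' j, q j ^ 2 := by
  have pointwise : ∀ ℓ, (∑' k, p k * q (ℓ - k)) ^ 2 ≤ (∑' k, p k) * ∑' k, p k * q (ℓ - k) ^ 2 :=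
    fun ℓ => tsum_sq_le_tsum_mul_tsum fun k => le_of_eq (by ring)
  calc ∑' ℓ, (∑' k, p k * q (ℓ - k)) ^ 2
      ≤ ∑' ℓ, (∑' k, p k) * ∑' k, p k * q (ℓ - k) ^ 2 := ENNReal.tsum_le_tsum pointwise
    _ = (∑' k, p k) * ∑' k, p k * ∑' ℓ, q (ℓ - k) ^ 2 := by
        rw [ENNReal.tsum_mul_left, ENNReal.tsum_comm]
        simp only [ENNReal.tsum_mul_left]
    _ = (∑' k, p k) ^ 2 * ∑' j, q j ^ 2 := by
        have shift : ∀ k, ∑' ℓ, q (ℓ - k) ^ 2 = ∑' j, q j ^ 2 := fun k =>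
          (Equiv.subRight k).tsum_eq fun j => q j ^ 2
        simp only [shift, ENNReal.tsum_mul_right]
        ring

end ENNReal

section Brackets

variable {k j : ℤ × ℤ}

theorem one_le_hnrm (k : ℤ × ℤ) : 1 ≤ hnrm k :=
  Real.one_le_sqrt.mpr (by nlinarith [sq_nonneg (k.1 : ℝ), sq_nonneg (k.2 : ℝ)])

theorem hnrm_pos (k : ℤ × ℤ) : 0 < hnrm k := one_pos.trans_le (one_le_hnrm k)

@[simp]
theorem hnrm_neg (k : ℤ × ℤ) : hnrm (-k) = hnrm k := by simp [hnrm]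

@[simp]
theorem znrm_neg (k : ℤ × ℤ) : znrm (-k) = znrm k := by simp [znrm]

theorem znrm_nonneg (k : ℤ × ℤ) : 0 ≤ znrm k := Real.sqrt_nonneg _

theorem znrm_le_hnrm (k : ℤ × ℤ) : znrm k ≤ hnrm k :=
  Real.sqrt_le_sqrt (by linarith)

theorem one_le_sq_add_sq (hk : k ≠ 0) : (1 : ℝ) ≤ (k.1 : ℝ) ^ 2 + (k.2 : ℝ) ^ 2 := by
  obtain ⟨a, b⟩ := k
  have hab : a ≠ 0 ∨ b ≠ 0 := by simpa [Prod.ext_iff, ← not_and_or] using hk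
  have : (1 : ℤ) ≤ a ^ 2 + b ^ 2 := by
    rcases hab with h | h <;> nlinarith [Int.one_le_abs h, sq_abs a, sq_abs b]
  exact_mod_cast this

theorem hnrm_le_two_mul_znrm (hk : k ≠ 0) : hnrm k ≤ 2 * znrm k := by
  have := one_le_sq_add_sq hk
  rw [hnrm, Real.sqrt_le_iff, mul_pow, znrm, Real.sq_sqrt (by positivity)]
  constructor <;> nlinarith [Real.sqrt_nonneg ((k.1 : ℝ) ^ 2 + (k.2 : ℝ) ^ 2)]

theorem hnrm_add_le_two_mul (h : znrm k ≤ znrm j) : hnrm (k + j) ≤ 2 * hnrm j := by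
  have hsq : (k.1 : ℝ) ^ 2 + (k.2 : ℝ) ^ 2 ≤ (j.1 : ℝ) ^ 2 + (j.2 : ℝ) ^ 2 :=
    (Real.sqrt_le_sqrt_iff (by positivity)).mp h
  rw [hnrm, Real.sqrt_le_iff, mul_pow, hnrm, Real.sq_sqrt (by positivity)]
  refine ⟨by positivity, ?_⟩
  simp only [Prod.fst_add, Prod.snd_add, Int.cast_add]
  nlinarith [sq_nonneg ((k.1 : ℝ) - j.1), sq_nonneg ((k.2 : ℝ) - j.2)]

theorem summable_hnrm_rpow_neg_four : Summable fun k : ℤ × ℤ => hnrm k ^ (-4 : ℝ) := by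
  have h1 : Summable fun n : ℤ => (1 + (n : ℝ) ^ 2)⁻¹ := by
    refine (Real.summable_one_div_int_pow.mpr one_lt_two).of_norm_bounded_eventually ?_
    filter_upwards [Filter.eventually_cofinite_ne 0] with n hn
    rw [Real.norm_of_nonneg (by positivity), one_div]
    exact inv_anti₀ (by positivity) (by linarith)
  refine (h1.mul_of_nonneg h1 (fun _ => by positivity) fun _ => by positivity).of_nonneg_of_le
    (fun k => (Real.rpow_pos_of_pos (hnrm_pos k) _).le) fun k => ?_
  have h4 : hnrm k ^ (-4 : ℝ) = ((1 + (k.1 : ℝ) ^ 2 + (k.2 : ℝ) ^ 2) ^ 2)⁻¹ := by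
    rw [Real.rpow_neg (hnrm_pos k).le, show (4 : ℝ) = (2 * 2 : ℕ) by norm_num, Real.rpow_natCast,
      pow_mul, hnrm, Real.sq_sqrt (by positivity)]
  rw [h4, ← mul_inv]
  exact inv_anti₀ (by positivity)
    (by nlinarith [sq_nonneg ((k.1 : ℝ) * k.2), sq_nonneg (k.1 : ℝ), sq_nonneg (k.2 : ℝ)])

end Brackets

section Symbol

variable {μ ρ s : ℝ} {k j : ℤ × ℤ}

theorem hnrm_add_rpow_mul_le_of_znrm_le (hμ : 0 ≤ μ) (hρ : 0 ≤ ρ) (hsρ : 0 ≤ s + ρ)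
    (hj : j ≠ 0) (h : znrm k ≤ znrm j) :
    hnrm (k + j) ^ (s + ρ) * (znrm k ^ μ * znrm j ^ (-ρ))
      ≤ 2 ^ (s + 2 * ρ) * (hnrm k ^ μ * hnrm j ^ s) := by
  have hk₀ := hnrm_pos k
  have hj₀ := hnrm_pos j
  have hzk := znrm_nonneg k
  have hzj := znrm_nonneg j
  have sum_le : hnrm (k + j) ^ (s + ρ) ≤ (2 * hnrm j) ^ (s + ρ) :=
    Real.rpow_le_rpow (hnrm_pos _).le (hnrm_add_le_two_mul h) hsρ
  have min_le : znrm k ^ μ ≤ hnrm k ^ μ :=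
    Real.rpow_le_rpow hzk (znrm_le_hnrm k) hμ
  have max_le : znrm j ^ (-ρ) ≤ (hnrm j / 2) ^ (-ρ) :=
    Real.rpow_le_rpow_of_nonpos (by positivity) (by linarith [hnrm_le_two_mul_znrm hj])
      (by linarith)
  have split_s : hnrm j ^ s = hnrm j ^ (s + ρ) * hnrm j ^ (-ρ) := by
    rw [← Real.rpow_add hj₀]; ring_nf
  have split_two : (2 : ℝ) ^ (s + 2 * ρ) = 2 ^ (s + ρ) * 2 ^ ρ := by
    rw [← Real.rpow_add two_pos]; ring_nf
  calc hnrm (k + j) ^ (s + ρ) * (znrm k ^ μ * znrm j ^ (-ρ))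
      ≤ (2 * hnrm j) ^ (s + ρ) * (hnrm k ^ μ * (hnrm j / 2) ^ (-ρ)) := by
        gcongr
    _ = 2 ^ (s + 2 * ρ) * (hnrm k ^ μ * hnrm j ^ s) := by
        rw [split_s, split_two, Real.mul_rpow two_pos.le hj₀.le, Real.div_rpow hj₀.le two_pos.le,
          Real.rpow_neg two_pos.le]
        field_simp

theorem hnrm_add_rpow_mul_min_max_le (hμ : 0 ≤ μ) (hρ : 0 ≤ ρ) (hsρ : 0 ≤ s + ρ)
    (hk : k ≠ 0) (hj : j ≠ 0) :
    hnrm (k + j) ^ (s + ρ) * (min (znrm k) (znrm j) ^ μ * max (znrm k) (znrm j) ^ (-ρ))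
      ≤ 2 ^ (s + 2 * ρ) * (hnrm k ^ μ * hnrm j ^ s + hnrm k ^ s * hnrm j ^ μ) := by
  have hk₀ := hnrm_pos k
  have hj₀ := hnrm_pos j
  rcases le_total (znrm k) (znrm j) with h | h
  · rw [min_eq_left h, max_eq_right h]
    refine (hnrm_add_rpow_mul_le_of_znrm_le hμ hρ hsρ hj h).trans ?_
    gcongr
    exact le_add_of_nonneg_right (by positivity)
  · rw [min_eq_right h, max_eq_left h, add_comm k j]
    refine (hnrm_add_rpow_mul_le_of_znrm_le hμ hρ hsρ hk h).trans ?_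
    rw [mul_comm (hnrm j ^ μ)]
    gcongr
    exact le_add_of_nonneg_left (by positivity)

end Symbol

def hnrmE (k : ℤ × ℤ) : ℝ≥0∞ := ENNReal.ofReal (hnrm k)

-- `sob t f ^ 2`, without summability side conditions.
def sobSqE (t : ℝ) (f : ℤ × ℤ → ℂ) : ℝ≥0∞ := ∑' k, (hnrmE k ^ t * ‖f k‖ₑ) ^ 2

section Weights

variable {t u : ℝ} {f : ℤ × ℤ → ℂ}

theorem hnrmE_rpow (t : ℝ) (k : ℤ × ℤ) : hnrmE k ^ t = ENNReal.ofReal (hnrm k ^ t) :=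
  ENNReal.ofReal_rpow_of_pos (hnrm_pos k)

@[simp]
theorem hnrmE_neg (k : ℤ × ℤ) : hnrmE (-k) = hnrmE k := by simp [hnrmE]

theorem one_le_hnrmE (k : ℤ × ℤ) : 1 ≤ hnrmE k := by
  simpa [hnrmE] using ENNReal.ofReal_le_ofReal (one_le_hnrm k)

theorem hnrmE_rpow_add (t u : ℝ) (k : ℤ × ℤ) :
    hnrmE k ^ (t + u) = hnrmE k ^ t * hnrmE k ^ u :=
  ENNReal.rpow_add _ _ (one_pos.trans_le (one_le_hnrmE k)).ne' ENNReal.ofReal_ne_top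

theorem tsum_hnrmE_rpow_neg_four_ne_top : ∑' k, hnrmE k ^ (-4 : ℝ) ≠ ⊤ := by
  simp only [hnrmE_rpow]
  rw [← ENNReal.ofReal_tsum_of_nonneg (fun k => (Real.rpow_pos_of_pos (hnrm_pos k) _).le)
    summable_hnrm_rpow_neg_four]
  exact ENNReal.ofReal_ne_top

theorem tsum_hnrmE_rpow_mul_sq_le (t : ℝ) (a : ℤ × ℤ → ℝ≥0∞) :
    (∑' k, hnrmE k ^ t * a k) ^ 2
      ≤ (∑' k, hnrmE k ^ (-4 : ℝ)) * ∑' k, (hnrmE k ^ (2 + t) * a k) ^ 2 := by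
  refine ENNReal.tsum_sq_le_tsum_mul_tsum fun k => le_of_eq ?_
  simp only [mul_pow, ← ENNReal.rpow_mul_natCast, ← mul_assoc, ← hnrmE_rpow_add]
  ring_nf

theorem sq_hnrmE_rpow_mul_enorm (t : ℝ) (f : ℤ × ℤ → ℂ) (k : ℤ × ℤ) :
    (hnrmE k ^ t * ‖f k‖ₑ) ^ 2 = ENNReal.ofReal (hnrm k ^ (2 * t) * ‖f k‖ ^ 2) := by
  have hk₀ := hnrm_pos k
  rw [hnrmE_rpow, ← ofReal_norm, ← ENNReal.ofReal_mul (by positivity),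
    ← ENNReal.ofReal_pow (by positivity), mul_pow, ← Real.rpow_mul_natCast hk₀.le]
  ring_nf

theorem sob_eq_sqrt_toReal_sobSqE (t : ℝ) (f : ℤ × ℤ → ℂ) :
    sob t f = √(sobSqE t f).toReal := by
  rw [sob, sobSqE, ENNReal.tsum_toReal_eq fun k => by simp [sq_hnrmE_rpow_mul_enorm]]
  congr 1
  refine tsum_congr fun k => ?_
  have := hnrm_pos k
  rw [sq_hnrmE_rpow_mul_enorm, ENNReal.toReal_ofReal (by positivity)]

theorem sobSqE_ne_top (hf : Summable fun k => hnrm k ^ (2 * t) * ‖f k‖ ^ 2) :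
    sobSqE t f ≠ ⊤ := by
  rw [sobSqE]
  simp only [sq_hnrmE_rpow_mul_enorm]
  rw [← ENNReal.ofReal_tsum_of_nonneg (fun k => by have := hnrm_pos k; positivity) hf]
  exact ENNReal.ofReal_ne_top

theorem sobSqE_eq_ofReal_sob_sq (hf : sobSqE t f ≠ ⊤) :
    sobSqE t f = ENNReal.ofReal (sob t f ^ 2) := by
  rw [sob_eq_sqrt_toReal_sobSqE, Real.sq_sqrt ENNReal.toReal_nonneg, ENNReal.ofReal_toReal hf]

theorem sobSqE_mono (htu : t ≤ u) (f : ℤ × ℤ → ℂ) : sobSqE t f ≤ sobSqE u f :=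
  ENNReal.tsum_le_tsum fun k => by
    gcongr
    exact one_le_hnrmE k

theorem sobSqE_conj_neg (t : ℝ) (f : ℤ × ℤ → ℂ) :
    sobSqE t (fun k => starRingEnd ℂ (f (-k))) = sobSqE t f := by
  calc sobSqE t (fun k => starRingEnd ℂ (f (-k)))
      = ∑' k, (hnrmE (-k) ^ t * ‖f (-k)‖ₑ) ^ 2 := by simp [sobSqE]
    _ = sobSqE t f := (Equiv.neg (ℤ × ℤ)).tsum_eq fun k => (hnrmE k ^ t * ‖f k‖ₑ) ^ 2

end Weights

theorem tsum_mul_sub_comm {G R : Type*} [AddCommGroup G] [CommSemiring R] [TopologicalSpace R]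
    (p q : G → R) (ℓ : G) : ∑' k, p k * q (ℓ - k) = ∑' k, q k * p (ℓ - k) := by
  rw [← (Equiv.subLeft ℓ).tsum_eq]
  simp [mul_comm]

theorem tsum_sq_weighted_conv_le_sobSqE (μ s : ℝ) (a b : ℤ × ℤ → ℂ) :
    ∑' ℓ, (∑' k, hnrmE k ^ μ * ‖a k‖ₑ * (hnrmE (ℓ - k) ^ s * ‖b (ℓ - k)‖ₑ)) ^ 2
      ≤ (∑' k, hnrmE k ^ (-4 : ℝ)) * sobSqE (2 + μ) a * sobSqE s b :=
  (ENNReal.tsum_sq_tsum_mul_sub_le (fun k => hnrmE k ^ μ * ‖a k‖ₑ)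
    fun j => hnrmE j ^ s * ‖b j‖ₑ).trans (mul_le_mul_left (tsum_hnrmE_rpow_mul_sq_le μ _) _)

def bilinMajorant (K : ℤ × ℤ → ℤ × ℤ → ℂ) (a b : ℤ × ℤ → ℂ) (ℓ : ℤ × ℤ) : ℝ≥0∞ :=
  ∑' k, ‖K k (ℓ - k)‖ₑ * ‖a k‖ₑ * ‖b (ℓ - k)‖ₑ

section Bilinear

variable {μ s σ : ℝ} {B : ℝ≥0∞} {K : ℤ × ℤ → ℤ × ℤ → ℂ} {a b : ℤ × ℤ → ℂ}

theorem hnrmE_rpow_mul_bilinMajorant_le (ha : a 0 = 0) (hb : b 0 = 0)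
    (hK : ∀ k j, k ≠ 0 → j ≠ 0 → hnrmE (k + j) ^ σ * ‖K k j‖ₑ
      ≤ B * (hnrmE k ^ μ * hnrmE j ^ s + hnrmE k ^ s * hnrmE j ^ μ)) (ℓ : ℤ × ℤ) :
    hnrmE ℓ ^ σ * bilinMajorant K a b ℓ
      ≤ B * (∑' k, hnrmE k ^ μ * ‖a k‖ₑ * (hnrmE (ℓ - k) ^ s * ‖b (ℓ - k)‖ₑ)
        + ∑' k, hnrmE k ^ s * ‖a k‖ₑ * (hnrmE (ℓ - k) ^ μ * ‖b (ℓ - k)‖ₑ)) := by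
  rw [bilinMajorant, ← ENNReal.tsum_mul_left, ← ENNReal.tsum_add, ← ENNReal.tsum_mul_left]
  refine ENNReal.tsum_le_tsum fun k => ?_
  rcases eq_or_ne k 0 with rfl | hk
  · simp [ha]
  rcases eq_or_ne (ℓ - k) 0 with hj | hj
  · simp [hj, hb]
  calc hnrmE ℓ ^ σ * (‖K k (ℓ - k)‖ₑ * ‖a k‖ₑ * ‖b (ℓ - k)‖ₑ)
      = hnrmE (k + (ℓ - k)) ^ σ * ‖K k (ℓ - k)‖ₑ * (‖a k‖ₑ * ‖b (ℓ - k)‖ₑ) := by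
        rw [add_sub_cancel]; ring
    _ ≤ B * (hnrmE k ^ μ * hnrmE (ℓ - k) ^ s + hnrmE k ^ s * hnrmE (ℓ - k) ^ μ)
          * (‖a k‖ₑ * ‖b (ℓ - k)‖ₑ) := mul_le_mul_left (hK k (ℓ - k) hk hj) _
    _ = _ := by ring

theorem tsum_sq_hnrmE_rpow_mul_bilinMajorant_le (ha : a 0 = 0) (hb : b 0 = 0)
    (hK : ∀ k j, k ≠ 0 → j ≠ 0 → hnrmE (k + j) ^ σ * ‖K k j‖ₑ
      ≤ B * (hnrmE k ^ μ * hnrmE j ^ s + hnrmE k ^ s * hnrmE j ^ μ)) :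
    ∑' ℓ, (hnrmE ℓ ^ σ * bilinMajorant K a b ℓ) ^ 2
      ≤ 2 * B ^ 2 * (∑' k, hnrmE k ^ (-4 : ℝ))
        * (sobSqE (2 + μ) a * sobSqE s b + sobSqE s a * sobSqE (2 + μ) b) := by
  set Λ := ∑' k, hnrmE k ^ (-4 : ℝ)
  have swap : ∀ ℓ, ∑' k, hnrmE k ^ s * ‖a k‖ₑ * (hnrmE (ℓ - k) ^ μ * ‖b (ℓ - k)‖ₑ)
      = ∑' k, hnrmE k ^ μ * ‖b k‖ₑ * (hnrmE (ℓ - k) ^ s * ‖a (ℓ - k)‖ₑ) :=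
    tsum_mul_sub_comm (fun k => hnrmE k ^ s * ‖a k‖ₑ) (fun k => hnrmE k ^ μ * ‖b k‖ₑ)
  calc ∑' ℓ, (hnrmE ℓ ^ σ * bilinMajorant K a b ℓ) ^ 2
      ≤ ∑' ℓ, (B * (∑' k, hnrmE k ^ μ * ‖a k‖ₑ * (hnrmE (ℓ - k) ^ s * ‖b (ℓ - k)‖ₑ)
          + ∑' k, hnrmE k ^ μ * ‖b k‖ₑ * (hnrmE (ℓ - k) ^ s * ‖a (ℓ - k)‖ₑ))) ^ 2 := by
        refine ENNReal.tsum_le_tsum fun ℓ => ?_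
        rw [← swap]
        exact pow_le_pow_left' (hnrmE_rpow_mul_bilinMajorant_le ha hb hK ℓ) 2
    _ ≤ B ^ 2 * (2 * (Λ * sobSqE (2 + μ) a * sobSqE s b + Λ * sobSqE (2 + μ) b * sobSqE s a)) := by
        simp only [mul_pow, ENNReal.tsum_mul_left]
        gcongr
        refine (ENNReal.tsum_add_sq_le _ _).trans ?_
        gcongr <;> exact tsum_sq_weighted_conv_le_sobSqE μ s _ _
    _ = 2 * B ^ 2 * Λ * (sobSqE (2 + μ) a * sobSqE s b + sobSqE s a * sobSqE (2 + μ) b) := by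
        ring

end Bilinear

theorem hnrmE_rpow_mul_enorm_le {μ ρ C s : ℝ} (hμ : 0 ≤ μ) (hρ : 0 ≤ ρ) (hC : 0 ≤ C)
    (hsρ : 0 ≤ s + ρ) {k j : ℤ × ℤ} (hk : k ≠ 0) (hj : j ≠ 0) {c : ℂ}
    (hc : ‖c‖ ≤ C * min (znrm k) (znrm j) ^ μ * max (znrm k) (znrm j) ^ (-ρ)) :
    hnrmE (k + j) ^ (s + ρ) * ‖c‖ₑ
      ≤ ENNReal.ofReal (C * 2 ^ (s + 2 * ρ))
        * (hnrmE k ^ μ * hnrmE j ^ s + hnrmE k ^ s * hnrmE j ^ μ) := by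
  have hk₀ := hnrm_pos k
  have hj₀ := hnrm_pos j
  have hkj₀ := hnrm_pos (k + j)
  have hzk := znrm_nonneg k
  have hzj := znrm_nonneg j
  have hreal : hnrm (k + j) ^ (s + ρ) * ‖c‖
      ≤ C * 2 ^ (s + 2 * ρ) * (hnrm k ^ μ * hnrm j ^ s + hnrm k ^ s * hnrm j ^ μ) :=
    calc hnrm (k + j) ^ (s + ρ) * ‖c‖
        ≤ C * (hnrm (k + j) ^ (s + ρ)
            * (min (znrm k) (znrm j) ^ μ * max (znrm k) (znrm j) ^ (-ρ))) := by
          rw [mul_left_comm, ← mul_assoc C]; gcongr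
      _ ≤ C * (2 ^ (s + 2 * ρ) * (hnrm k ^ μ * hnrm j ^ s + hnrm k ^ s * hnrm j ^ μ)) :=
          mul_le_mul_of_nonneg_left (hnrm_add_rpow_mul_min_max_le hμ hρ hsρ hk hj) hC
      _ = C * 2 ^ (s + 2 * ρ) * (hnrm k ^ μ * hnrm j ^ s + hnrm k ^ s * hnrm j ^ μ) := by ring
  convert ENNReal.ofReal_le_ofReal hreal using 1
  · rw [ENNReal.ofReal_mul (by positivity), ofReal_norm, hnrmE_rpow]
  · rw [ENNReal.ofReal_mul (p := C * 2 ^ (s + 2 * ρ)) (by positivity),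
      ENNReal.ofReal_add (by positivity) (by positivity),
      ENNReal.ofReal_mul (p := hnrm k ^ μ) (by positivity),
      ENNReal.ofReal_mul (p := hnrm k ^ s) (by positivity)]
    simp only [hnrmE_rpow]

def bilinOp (Rp Rm : ℤ × ℤ → ℤ × ℤ → ℂ) (z v : ℤ × ℤ → ℂ) (ℓ : ℤ × ℤ) : ℂ :=
  ∑' k, (Rp k (ℓ - k) * z k * v (ℓ - k) + Rm k (ℓ + k) * starRingEnd ℂ (z k) * v (ℓ + k))

-- Substituting `k ↦ -k` in the conjugate part makes it a convolution as well.
theorem enorm_bilinOp_le (Rp Rm : ℤ × ℤ → ℤ × ℤ → ℂ) (z v : ℤ × ℤ → ℂ) (ℓ : ℤ × ℤ) :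
    ‖bilinOp Rp Rm z v ℓ‖ₑ ≤ bilinMajorant Rp z v ℓ
      + bilinMajorant (fun k j => Rm (-k) j) (fun k => starRingEnd ℂ (z (-k))) v ℓ := by
  have reflect : bilinMajorant (fun k j => Rm (-k) j) (fun k => starRingEnd ℂ (z (-k))) v ℓ
      = ∑' k, ‖Rm k (ℓ + k) * starRingEnd ℂ (z k) * v (ℓ + k)‖ₑ := by
    rw [bilinMajorant, ← (Equiv.neg (ℤ × ℤ)).tsum_eq]
    simp [enorm_mul, sub_eq_add_neg]
  calc ‖bilinOp Rp Rm z v ℓ‖ₑ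
      ≤ ∑' k, (‖Rp k (ℓ - k) * z k * v (ℓ - k)‖ₑ
          + ‖Rm k (ℓ + k) * starRingEnd ℂ (z k) * v (ℓ + k)‖ₑ) :=
        enorm_tsum_le_tsum_enorm.trans (ENNReal.tsum_le_tsum fun k => enorm_add_le _ _)
    _ = _ := by
        rw [ENNReal.tsum_add, reflect, bilinMajorant]
        simp only [enorm_mul]

theorem sobSqE_bilinOp_le {μ s σ : ℝ} {B : ℝ≥0∞} {Rp Rm : ℤ × ℤ → ℤ × ℤ → ℂ}
    {z v : ℤ × ℤ → ℂ} (hz : z 0 = 0) (hv : v 0 = 0)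
    (hRp : ∀ k j, k ≠ 0 → j ≠ 0 → hnrmE (k + j) ^ σ * ‖Rp k j‖ₑ
      ≤ B * (hnrmE k ^ μ * hnrmE j ^ s + hnrmE k ^ s * hnrmE j ^ μ))
    (hRm : ∀ k j, k ≠ 0 → j ≠ 0 → hnrmE (k + j) ^ σ * ‖Rm (-k) j‖ₑ
      ≤ B * (hnrmE k ^ μ * hnrmE j ^ s + hnrmE k ^ s * hnrmE j ^ μ)) :
    sobSqE σ (bilinOp Rp Rm z v)
      ≤ 8 * B ^ 2 * (∑' k, hnrmE k ^ (-4 : ℝ))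
        * (sobSqE (2 + μ) z * sobSqE s v + sobSqE s z * sobSqE (2 + μ) v) := by
  calc sobSqE σ (bilinOp Rp Rm z v)
      ≤ ∑' ℓ, (hnrmE ℓ ^ σ * bilinMajorant Rp z v ℓ + hnrmE ℓ ^ σ
          * bilinMajorant (fun k j => Rm (-k) j) (fun k => starRingEnd ℂ (z (-k))) v ℓ) ^ 2 :=
        ENNReal.tsum_le_tsum fun ℓ => by
          rw [← mul_add]; gcongr; exact enorm_bilinOp_le Rp Rm z v ℓ
    _ ≤ 2 * (2 * B ^ 2 * (∑' k, hnrmE k ^ (-4 : ℝ))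
          * (sobSqE (2 + μ) z * sobSqE s v + sobSqE s z * sobSqE (2 + μ) v)
        + 2 * B ^ 2 * (∑' k, hnrmE k ^ (-4 : ℝ))
          * (sobSqE (2 + μ) z * sobSqE s v + sobSqE s z * sobSqE (2 + μ) v)) := by
        refine (ENNReal.tsum_add_sq_le _ _).trans ?_
        gcongr
        · exact tsum_sq_hnrmE_rpow_mul_bilinMajorant_le hz hv hRp
        · simpa only [sobSqE_conj_neg] using tsum_sq_hnrmE_rpow_mul_bilinMajorant_le
            (a := fun k => starRingEnd ℂ (z (-k))) (by simp [hz]) hv hRm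
    _ = _ := by ring

theorem sob_nonneg (t : ℝ) (f : ℤ × ℤ → ℂ) : 0 ≤ sob t f := Real.sqrt_nonneg _

theorem sob_le_sqrt_mul_of_sobSqE_le {σ t₁ t₂ : ℝ} {w z v : ℤ × ℤ → ℂ} {M : ℝ≥0∞} (hM : M ≠ ⊤)
    (hz₁ : sobSqE t₁ z ≠ ⊤) (hz₂ : sobSqE t₂ z ≠ ⊤) (hv₁ : sobSqE t₁ v ≠ ⊤)
    (hv₂ : sobSqE t₂ v ≠ ⊤)
    (h : sobSqE σ w ≤ M * (sobSqE t₁ z * sobSqE t₂ v + sobSqE t₂ z * sobSqE t₁ v)) :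
    sob σ w ≤ √M.toReal * (sob t₁ z * sob t₂ v + sob t₂ z * sob t₁ v) := by
  have hsz₁ := sob_nonneg t₁ z
  have hsz₂ := sob_nonneg t₂ z
  have hsv₁ := sob_nonneg t₁ v
  have hsv₂ := sob_nonneg t₂ v
  set X := sob t₁ z * sob t₂ v + sob t₂ z * sob t₁ v
  have hX : sobSqE t₁ z * sobSqE t₂ v + sobSqE t₂ z * sobSqE t₁ v ≤ ENNReal.ofReal (X ^ 2) := by
    rw [sobSqE_eq_ofReal_sob_sq hz₁, sobSqE_eq_ofReal_sob_sq hz₂, sobSqE_eq_ofReal_sob_sq hv₁,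
      sobSqE_eq_ofReal_sob_sq hv₂, ← ENNReal.ofReal_mul (sq_nonneg _),
      ← ENNReal.ofReal_mul (sq_nonneg _), ← ENNReal.ofReal_add (by positivity) (by positivity)]
    exact ENNReal.ofReal_le_ofReal
      (by nlinarith [mul_nonneg (mul_nonneg hsz₁ hsv₂) (mul_nonneg hsz₂ hsv₁)])
  have hw : sobSqE σ w ≤ ENNReal.ofReal (M.toReal * X ^ 2) := by
    rw [ENNReal.ofReal_mul ENNReal.toReal_nonneg, ENNReal.ofReal_toReal hM]
    exact h.trans (by gcongr)
  rw [sob_eq_sqrt_toReal_sobSqE, ← Real.sqrt_sq (by positivity : 0 ≤ X),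
    ← Real.sqrt_mul ENNReal.toReal_nonneg]
  exact Real.sqrt_le_sqrt (ENNReal.toReal_le_of_le_ofReal (by positivity) hw)

theorem stmt6_general (μ ρ C : ℝ) (hμ : 0 < μ) (hρ : 0 < ρ) (hC : 0 < C)
    (Rp Rm : ℤ × ℤ → ℤ × ℤ → ℂ)
    (hbound : ∀ k j : ℤ × ℤ, k ≠ 0 → j ≠ 0 →
      ‖Rp k j‖ ≤ C * min (znrm k) (znrm j) ^ μ * max (znrm k) (znrm j) ^ (-ρ) ∧
      ‖Rm k j‖ ≤ C * min (znrm k) (znrm j) ^ μ * max (znrm k) (znrm j) ^ (-ρ)) :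
    ∀ s : ℝ, 2 + μ ≤ s → ∃ Cs > 0, ∀ z v : ℤ × ℤ → ℂ, z 0 = 0 → v 0 = 0 →
      Summable (fun k => hnrm k ^ (2 * s) * ‖z k‖ ^ 2) →
      Summable (fun k => hnrm k ^ (2 * s) * ‖v k‖ ^ 2) →
      sob (s + ρ) (fun ℓ => ∑' k : ℤ × ℤ,
          (Rp k (ℓ - k) * z k * v (ℓ - k) +
            Rm k (ℓ + k) * (starRingEnd ℂ) (z k) * v (ℓ + k)))
        ≤ Cs * (sob (2 + μ) z * sob s v + sob s z * sob (2 + μ) v) := by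
  intro s hs
  have hsρ : 0 ≤ s + ρ := by linarith
  set B := ENNReal.ofReal (C * 2 ^ (s + 2 * ρ))
  set M := 8 * B ^ 2 * ∑' k, hnrmE k ^ (-4 : ℝ)
  have hM : M ≠ ⊤ := ENNReal.mul_ne_top (ENNReal.mul_ne_top (by norm_num)
    (ENNReal.pow_ne_top ENNReal.ofReal_ne_top)) tsum_hnrmE_rpow_neg_four_ne_top
  have hM₀ : M ≠ 0 := by
    have hB : B ≠ 0 := (ENNReal.ofReal_pos.mpr (by positivity)).ne'
    have hΛ : ∑' k, hnrmE k ^ (-4 : ℝ) ≠ 0 := ne_of_gt <| (ENNReal.rpow_pos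
      (one_pos.trans_le (one_le_hnrmE 0)) ENNReal.ofReal_ne_top).trans_le (ENNReal.le_tsum 0)
    simp [M, hB, hΛ]
  refine ⟨√M.toReal, Real.sqrt_pos.mpr (ENNReal.toReal_pos hM₀ hM), fun z v hz hv hzs hvs => ?_⟩
  have hzs' := sobSqE_ne_top hzs
  have hvs' := sobSqE_ne_top hvs
  refine sob_le_sqrt_mul_of_sobSqE_le (w := bilinOp Rp Rm z v) hM
    (ne_top_of_le_ne_top hzs' (sobSqE_mono (by linarith) z)) hzs'
    (ne_top_of_le_ne_top hvs' (sobSqE_mono (by linarith) v)) hvs' (sobSqE_bilinOp_le hz hv ?_ ?_)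
  · exact fun k j hk hj => hnrmE_rpow_mul_enorm_le hμ.le hρ.le hC.le hsρ hk hj (hbound k j hk hj).1
  · intro k j hk hj
    have hRm := (hbound (-k) j (neg_ne_zero.mpr hk) hj).2
    rw [znrm_neg] at hRm
    exact hnrmE_rpow_mul_enorm_le hμ.le hρ.le hC.le hsρ hk hj hRm

theorem stmt6 (μ ρ C : ℝ) (hμ : 0 < μ) (hρ : 0 < ρ) (hC : 0 < C)
    (Rp Rm : ℤ × ℤ → ℤ × ℤ → ℂ)
    (hzero : ∀ k j : ℤ × ℤ, k = 0 ∨ j = 0 → Rp k j = 0 ∧ Rm k j = 0)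
    (hbound : ∀ k j : ℤ × ℤ, k ≠ 0 → j ≠ 0 →
      ‖Rp k j‖ ≤ C * min (znrm k) (znrm j) ^ μ * max (znrm k) (znrm j) ^ (-ρ) ∧
      ‖Rm k j‖ ≤ C * min (znrm k) (znrm j) ^ μ * max (znrm k) (znrm j) ^ (-ρ)) :
    ∀ s : ℝ, 2 + μ ≤ s → ∃ Cs > 0, ∀ z v : ℤ × ℤ → ℂ, z 0 = 0 → v 0 = 0 →
      Summable (fun k => hnrm k ^ (2 * s) * ‖z k‖ ^ 2) →
      Summable (fun k => hnrm k ^ (2 * s) * ‖v k‖ ^ 2) →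
      sob (s + ρ) (fun ℓ => ∑' k : ℤ × ℤ,
          (Rp k (ℓ - k) * z k * v (ℓ - k) +
            Rm k (ℓ + k) * (starRingEnd ℂ) (z k) * v (ℓ + k)))
        ≤ Cs * (sob (2 + μ) z * sob s v + sob s z * sob (2 + μ) v) :=
  stmt6_general μ ρ C hμ hρ hC Rp Rm hbound
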